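/- Under the same setup (T, Δ disjoint, N_e = T∪Δ, A_{N_e} full column rank, M = I − A_T(A_T'A_T)^{-1}A_T', c the least-squares estimate on N_e, b̃ the minimizer of L over vectors supported on N_e), the ℓ² error satisfies ‖b̃ − c‖₂ ≤ γ √|Δ| · √( ‖(A_T'A_T)^{-1}A_T'A_Δ(A_Δ'MA_Δ)^{-1}‖₂² + ‖(A_Δ'MA_Δ)^{-1}‖₂² ). -/

import Mathlib

open Matrix Finset

noncomputable section

variable {n m : ℕ}

/-- Submatrix of columns of `A` indexed by `S`. -/
def cols (A : Matrix (Fin n) (Fin m) ℝ) (S : Finset (Fin m)) :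
    Matrix (Fin n) {j // j ∈ S} ℝ := Matrix.of fun i j => A i j.1

/-- Subvector of `b` on indices in `S`. -/
def subv (b : Fin m → ℝ) (S : Finset (Fin m)) : {j // j ∈ S} → ℝ := fun j => b j.1

/-- `b` is supported on `S`. -/
def suppOn (b : Fin m → ℝ) (S : Finset (Fin m)) : Prop := ∀ j, j ∉ S → b j = 0

def l2v {k : Type*} [Fintype k] (v : k → ℝ) : ℝ := Real.sqrt (∑ i, v i ^ 2)

def l1v {k : Type*} [Fintype k] (v : k → ℝ) : ℝ := ∑ i, |v i|

def linfv {k : Type*} [Fintype k] (v : k → ℝ) : ℝ := ⨆ i, |v i|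

/-- ℓ¹ norm of the subvector of `b` on the complement of `T`. -/
def l1c (b : Fin m → ℝ) (T : Finset (Fin m)) : ℝ := ∑ j ∈ Tᶜ, |b j|

/-- Induced ℓ∞→ℓ∞ operator norm (max absolute row sum). -/
def matInf {k l : Type*} [Fintype k] [Fintype l] (B : Matrix k l ℝ) : ℝ :=
  ⨆ i, ∑ j, |B i j|

/-- Spectral norm (ℓ²→ℓ² operator norm). -/
def spec {k l : Type*} [Fintype k] [Fintype l] (B : Matrix k l ℝ) : ℝ :=
  sSup ((fun x => l2v (B.mulVec x)) '' {x | l2v x ≤ 1})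

/-- The modified-BPDN objective L(b) = (1/2)‖y − Ab‖₂² + γ‖b_{Tᶜ}‖₁. -/
def objL (A : Matrix (Fin n) (Fin m) ℝ) (y : Fin n → ℝ) (γ : ℝ) (T : Finset (Fin m))
    (b : Fin m → ℝ) : ℝ :=
  (1/2) * (∑ i, (y i - A.mulVec b i) ^ 2) + γ * l1c b T

/-- Orthogonal projector M = I − A_T (A_Tᵀ A_T)⁻¹ A_Tᵀ. -/
def projM (A : Matrix (Fin n) (Fin m) ℝ) (T : Finset (Fin m)) : Matrix (Fin n) (Fin n) ℝ :=
  1 - cols A T * ((cols A T)ᵀ * cols A T)⁻¹ * (cols A T)ᵀ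

/-- Least squares coefficients on `S` : (A_Sᵀ A_S)⁻¹ A_Sᵀ y. -/
def lsq (A : Matrix (Fin n) (Fin m) ℝ) (S : Finset (Fin m)) (y : Fin n → ℝ) :
    {j // j ∈ S} → ℝ :=
  ((cols A S)ᵀ * cols A S)⁻¹.mulVec ((cols A S)ᵀ.mulVec y)

/-- Least squares estimate on `S`, as a vector in ℝᵐ supported on `S`. -/
def lsqFull (A : Matrix (Fin n) (Fin m) ℝ) (S : Finset (Fin m)) (y : Fin n → ℝ) :
    Fin m → ℝ := fun j => if h : j ∈ S then lsq A S y ⟨j, h⟩ else 0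

/-- The matrix A_Δᵀ M A_Δ. -/
def schur (A : Matrix (Fin n) (Fin m) ℝ) (T Δ : Finset (Fin m)) :
    Matrix {j // j ∈ Δ} {j // j ∈ Δ} ℝ :=
  (cols A Δ)ᵀ * projM A T * cols A Δ

/-- The matrix (A_Tᵀ A_T)⁻¹ A_Tᵀ A_Δ (A_Δᵀ M A_Δ)⁻¹. -/
def crossMat (A : Matrix (Fin n) (Fin m) ℝ) (T Δ : Finset (Fin m)) :
    Matrix {j // j ∈ T} {j // j ∈ Δ} ℝ :=
  ((cols A T)ᵀ * cols A T)⁻¹ * ((cols A T)ᵀ * cols A Δ) * (schur A T Δ)⁻¹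

/-- The exact-recovery-coefficient quantity ‖(A_Δᵀ M A_Δ)⁻¹ A_Δᵀ M A_ω‖₁. -/
def erc (A : Matrix (Fin n) (Fin m) ℝ) (T Δ : Finset (Fin m)) (ω : Fin m) : ℝ :=
  l1v ((schur A T Δ)⁻¹.mulVec (((cols A Δ)ᵀ * projM A T).mulVec (fun i => A i ω)))

/-- `δ` is a valid S-restricted isometry constant for `A`. -/
def RIP (A : Matrix (Fin n) (Fin m) ℝ) (S : ℕ) (δ : ℝ) : Prop :=
  0 ≤ δ ∧ ∀ (J : Finset (Fin m)), J.card ≤ S → ∀ x : Fin m → ℝ, suppOn x J →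
    (1 - δ) * (∑ i, x i ^ 2) ≤ (∑ i, (A.mulVec x i) ^ 2) ∧
    (∑ i, (A.mulVec x i) ^ 2) ≤ (1 + δ) * (∑ i, x i ^ 2)

/-- `θ` is a valid (S,S')-restricted orthogonality constant for `A`. -/
def ROC (A : Matrix (Fin n) (Fin m) ℝ) (S S' : ℕ) (θ : ℝ) : Prop :=
  0 ≤ θ ∧ ∀ (J J' : Finset (Fin m)), Disjoint J J' → J.card ≤ S → J'.card ≤ S' →
    ∀ x x' : Fin m → ℝ, suppOn x J → suppOn x' J' →
      |dotProduct (A.mulVec x) (A.mulVec x')| ≤ θ * l2v x * l2v x'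

/-- `b` minimizes the modified-BPDN objective over vectors supported on `S`. -/
def IsRestrMin (A : Matrix (Fin n) (Fin m) ℝ) (y : Fin n → ℝ) (γ : ℝ)
    (T S : Finset (Fin m)) (b : Fin m → ℝ) : Prop :=
  suppOn b S ∧ ∀ b', suppOn b' S → objL A y γ T b ≤ objL A y γ T b'

/-- `g` is a subgradient of `b ↦ ‖b_{Tᶜ}‖₁` at `b`. -/
def IsSubgrad (T : Finset (Fin m)) (b g : Fin m → ℝ) : Prop :=
  (∀ j, j ∈ T → g j = 0) ∧
  ∀ j, j ∉ T → |g j| ≤ 1 ∧ (b j ≠ 0 → g j = Real.sign (b j))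

/-! The residual correlations `r = Aᵀ (y - A b̃)` of the restricted minimiser vanish on `T` and
are bounded by `γ` on `Δ`: perturbing `b̃` in a single coordinate `j` changes `L` by
`-t rⱼ + O(t²)` plus at most `γ |t|` (nothing for `j ∈ T`). The difference `c - b̃` solves the
normal equations `A_Nᵀ A_N (c - b̃)_N = r_N`, and since `r_T = 0` the block inverse of `A_Nᵀ A_N`,
whose Schur complement is `A_Δᵀ M A_Δ`, gives `(c - b̃)_T = -crossMat · r_Δ` and
`(c - b̃)_Δ = (A_Δᵀ M A_Δ)⁻¹ r_Δ`. With `‖r_Δ‖₂ ≤ γ √|Δ|` the bound follows by Pythagoras. -/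

section Norms

open scoped Matrix.Norms.L2Operator

variable {k l : Type*} [Fintype k] [Fintype l]

lemma l2v_eq_norm (v : k → ℝ) : l2v v = ‖(WithLp.toLp 2 v : EuclideanSpace ℝ k)‖ := by
  simp [l2v, EuclideanSpace.norm_eq]

lemma l2v_nonneg (v : k → ℝ) : 0 ≤ l2v v := Real.sqrt_nonneg _

lemma l2v_neg (v : k → ℝ) : l2v (-v) = l2v v := by
  simp [l2v]

lemma spec_eq_l2_opNorm [DecidableEq l] (B : Matrix k l ℝ) : spec B = ‖B‖ := by
  rw [l2_opNorm_def, ← ContinuousLinearMap.sSup_unitClosedBall_eq_norm, spec]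
  congr 1
  ext r
  simp only [Set.mem_image, Set.mem_ofPred_eq, Metric.mem_closedBall, dist_zero_right,
    l2v_eq_norm]
  exact ⟨fun ⟨x, hx, h⟩ => ⟨WithLp.toLp 2 x, hx, h⟩, fun ⟨x, hx, h⟩ => ⟨x.ofLp, hx, h⟩⟩

lemma spec_nonneg (B : Matrix k l ℝ) : 0 ≤ spec B := by
  classical
  exact spec_eq_l2_opNorm B ▸ norm_nonneg B

lemma l2v_mulVec_le (B : Matrix k l ℝ) (x : l → ℝ) : l2v (B *ᵥ x) ≤ spec B * l2v x := by
  classical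
  rw [spec_eq_l2_opNorm, l2v_eq_norm, l2v_eq_norm]
  exact l2_opNorm_mulVec B (WithLp.toLp 2 x)

lemma l2v_le_sqrt_card_mul {c : ℝ} (hc : 0 ≤ c) {v : k → ℝ} (hv : ∀ i, |v i| ≤ c) :
    l2v v ≤ √(Fintype.card k) * c := by
  rw [← Real.sqrt_sq hc, ← Real.sqrt_mul (Nat.cast_nonneg _), l2v]
  gcongr
  calc ∑ i, v i ^ 2 ≤ ∑ _i : k, c ^ 2 :=
        Finset.sum_le_sum fun i _ => sq_le_sq' (abs_le.1 (hv i)).1 (abs_le.1 (hv i)).2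
    _ = Fintype.card k * c ^ 2 := by simp

end Norms

lemma l2v_sq_eq_add_of_suppOn_union {T Δ : Finset (Fin m)} (hdisj : Disjoint T Δ)
    {x : Fin m → ℝ} (hx : suppOn x (T ∪ Δ)) :
    l2v x ^ 2 = l2v (subv x T) ^ 2 + l2v (subv x Δ) ^ 2 := by
  simp only [l2v, Real.sq_sqrt (Finset.sum_nonneg fun _ _ => sq_nonneg _), subv]
  rw [Finset.sum_coe_sort T (fun j => x j ^ 2), Finset.sum_coe_sort Δ (fun j => x j ^ 2),
    ← Finset.sum_union hdisj]
  exact (Finset.sum_subset (Finset.subset_univ _) fun j _ hj => by simp [hx j hj]).symm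

lemma l2v_le_of_suppOn_union {T Δ : Finset (Fin m)} (hdisj : Disjoint T Δ) {x : Fin m → ℝ}
    (hx : suppOn x (T ∪ Δ)) {a b : ℝ} (hT : l2v (subv x T) ≤ a) (hΔ : l2v (subv x Δ) ≤ b) :
    l2v x ≤ √(a ^ 2 + b ^ 2) := by
  calc l2v x = √(l2v (subv x T) ^ 2 + l2v (subv x Δ) ^ 2) := by
        rw [← l2v_sq_eq_add_of_suppOn_union hdisj hx, Real.sqrt_sq (l2v_nonneg x)]
    _ ≤ √(a ^ 2 + b ^ 2) := by gcongr <;> apply l2v_nonneg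

open Filter Topology in
lemma abs_le_of_forall_mul_le {r s c : ℝ} (h : ∀ t, t * r ≤ s * t ^ 2 + c * |t|) : |r| ≤ c := by
  have hδ : ∀ δ > 0, |r| ≤ |s| * δ + c := by
    intro δ hδ
    have hpos := h δ
    have hneg := h (-δ)
    rw [abs_of_pos hδ] at hpos
    rw [abs_neg, abs_of_pos hδ] at hneg
    have hs : s * δ ≤ |s| * δ := mul_le_mul_of_nonneg_right (le_abs_self s) hδ.le
    have hs' : -s * δ ≤ |s| * δ := mul_le_mul_of_nonneg_right (neg_le_abs s) hδ.le
    rw [abs_le]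
    constructor <;> nlinarith
  have hlim : Tendsto (fun δ => |s| * δ + c) (𝓝[>] 0) (𝓝 c) :=
    tendsto_nhdsWithin_of_tendsto_nhds <|
      ((continuous_const.mul continuous_id).add continuous_const).tendsto' 0 c (by simp)
  exact ge_of_tendsto hlim (eventually_nhdsWithin_of_forall hδ)

lemma sum_sq_sub_mulVec_add_single (A : Matrix (Fin n) (Fin m) ℝ) (y : Fin n → ℝ)
    (b : Fin m → ℝ) (j : Fin m) (t : ℝ) :
    ∑ i, (y i - (A *ᵥ (b + Pi.single j t)) i) ^ 2 =
      ∑ i, (y i - (A *ᵥ b) i) ^ 2 - 2 * t * (Aᵀ *ᵥ (y - A *ᵥ b)) j + (∑ i, A i j ^ 2) * t ^ 2 := by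
  have hr : (Aᵀ *ᵥ (y - A *ᵥ b)) j = ∑ i, A i j * (y i - (A *ᵥ b) i) := rfl
  rw [mulVec_add, mulVec_single, hr, Finset.mul_sum, Finset.sum_mul, ← Finset.sum_sub_distrib,
    ← Finset.sum_add_distrib]
  refine Finset.sum_congr rfl fun i _ => ?_
  simp only [Pi.add_apply, Pi.smul_apply, col_apply, MulOpposite.smul_eq_mul_unop,
    MulOpposite.unop_op]
  ring

lemma l1c_add_le (b b' : Fin m → ℝ) (T : Finset (Fin m)) :
    l1c (b + b') T ≤ l1c b T + l1c b' T := by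
  rw [l1c, l1c, l1c, ← Finset.sum_add_distrib]
  exact Finset.sum_le_sum fun j _ => abs_add_le _ _

lemma l1c_single (T : Finset (Fin m)) (j : Fin m) (t : ℝ) :
    l1c (Pi.single j t) T = if j ∈ T then 0 else |t| := by
  by_cases hj : j ∈ T <;> simp [l1c, Pi.single_apply, apply_ite, hj]

lemma objL_add_single_le (A : Matrix (Fin n) (Fin m) ℝ) (y : Fin n → ℝ) {γ : ℝ} (hγ : 0 ≤ γ)
    (T : Finset (Fin m)) (b : Fin m → ℝ) (j : Fin m) (t : ℝ) :
    objL A y γ T (b + Pi.single j t) ≤ objL A y γ T b - t * (Aᵀ *ᵥ (y - A *ᵥ b)) j +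
      (∑ i, A i j ^ 2) / 2 * t ^ 2 + γ * l1c (Pi.single j t) T := by
  have := mul_le_mul_of_nonneg_left (l1c_add_le b (Pi.single j t) T) hγ
  rw [objL, objL, sum_sq_sub_mulVec_add_single]
  linarith

lemma IsRestrMin.mul_residual_le {A : Matrix (Fin n) (Fin m) ℝ} {y : Fin n → ℝ} {γ : ℝ}
    {T S : Finset (Fin m)} {b : Fin m → ℝ} (hb : IsRestrMin A y γ T S b) (hγ : 0 ≤ γ)
    {j : Fin m} (hj : j ∈ S) (t : ℝ) :
    t * (Aᵀ *ᵥ (y - A *ᵥ b)) j ≤ (∑ i, A i j ^ 2) / 2 * t ^ 2 + γ * l1c (Pi.single j t) T := by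
  have hsupp : suppOn (b + Pi.single j t) S := fun k hk => by
    simp [hb.1 k hk, show k ≠ j from fun h => hk (h ▸ hj)]
  have := (hb.2 _ hsupp).trans (objL_add_single_le A y hγ T b j t)
  linarith

lemma IsRestrMin.residual_eq_zero {A : Matrix (Fin n) (Fin m) ℝ} {y : Fin n → ℝ} {γ : ℝ}
    {T S : Finset (Fin m)} {b : Fin m → ℝ} (hb : IsRestrMin A y γ T S b) (hγ : 0 ≤ γ)
    {j : Fin m} (hjS : j ∈ S) (hjT : j ∈ T) : (Aᵀ *ᵥ (y - A *ᵥ b)) j = 0 :=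
  abs_nonpos_iff.1 <| abs_le_of_forall_mul_le fun t => by
    simpa [l1c_single, hjT] using hb.mul_residual_le hγ hjS t

lemma IsRestrMin.abs_residual_le {A : Matrix (Fin n) (Fin m) ℝ} {y : Fin n → ℝ} {γ : ℝ}
    {T S : Finset (Fin m)} {b : Fin m → ℝ} (hb : IsRestrMin A y γ T S b) (hγ : 0 ≤ γ)
    {j : Fin m} (hjS : j ∈ S) (hjT : j ∉ T) : |(Aᵀ *ᵥ (y - A *ᵥ b)) j| ≤ γ :=
  abs_le_of_forall_mul_le fun t => by
    simpa [l1c_single, hjT, mul_comm γ] using hb.mul_residual_le hγ hjS t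

lemma isUnit_transpose_mul_self_iff {R k l : Type*} [Field R] [LinearOrder R]
    [IsStrictOrderedRing R] [Fintype k] [Fintype l] [DecidableEq l] (B : Matrix k l R) :
    IsUnit (Bᵀ * B) ↔ LinearIndependent R B.col := by
  rw [← mulVec_injective_iff_isUnit, ← Matrix.mulVec_injective_iff, ← coe_mulVecLin,
    ← coe_mulVecLin, ← LinearMap.ker_eq_bot, ← LinearMap.ker_eq_bot,
    ker_mulVecLin_transpose_mul_self]

lemma fromBlocks_mulVec_eq_sumElim_zero {R ι κ : Type*} [CommRing R] [Fintype ι] [Fintype κ]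
    [DecidableEq ι] [DecidableEq κ] {P : Matrix ι ι R} {Q : Matrix ι κ R} {C : Matrix κ ι R}
    {D : Matrix κ κ R} (hP : IsUnit P) (hG : IsUnit (fromBlocks P Q C D))
    {u : ι → R} {v z : κ → R} (h : fromBlocks P Q C D *ᵥ Sum.elim u v = Sum.elim (0 : ι → R) z) :
    u = -((P⁻¹ * Q * (D - C * P⁻¹ * Q)⁻¹) *ᵥ z) ∧ v = (D - C * P⁻¹ * Q)⁻¹ *ᵥ z := by
  let _ := hP.invertible
  let _ := hG.invertible
  let _ := invertibleOfFromBlocks₁₁Invertible P Q C D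
  have hx : Sum.elim u v = ⅟(fromBlocks P Q C D) *ᵥ Sum.elim 0 z := by
    rw [← h, mulVec_mulVec, invOf_mul_self, one_mulVec]
  rw [invOf_fromBlocks₁₁_eq, fromBlocks_mulVec] at hx
  simp only [invOf_eq_nonsing_inv, Sum.elim_comp_inl, Sum.elim_comp_inr, mulVec_zero,
    neg_mulVec, zero_add] at hx
  exact ⟨funext fun i => congrFun hx (Sum.inl i), funext fun i => congrFun hx (Sum.inr i)⟩

section Columns

variable (A : Matrix (Fin n) (Fin m) ℝ)

lemma transpose_cols_mulVec (S : Finset (Fin m)) (w : Fin n → ℝ) :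
    (cols A S)ᵀ *ᵥ w = subv (Aᵀ *ᵥ w) S := rfl

lemma mulVec_eq_cols_mulVec_subv {S : Finset (Fin m)} {x : Fin m → ℝ} (hx : suppOn x S) :
    A *ᵥ x = cols A S *ᵥ subv x S := by
  ext i
  change ∑ k, A i k * x k = ∑ k : S, A i k * x k
  rw [Finset.sum_coe_sort S fun k => A i k * x k]
  exact (Finset.sum_subset (Finset.subset_univ S) fun k _ hk => by rw [hx k hk, mul_zero]).symm

lemma mulVec_eq_fromCols_mulVec {T Δ : Finset (Fin m)} (hdisj : Disjoint T Δ) {x : Fin m → ℝ}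
    (hx : suppOn x (T ∪ Δ)) :
    A *ᵥ x = fromCols (cols A T) (cols A Δ) *ᵥ Sum.elim (subv x T) (subv x Δ) := by
  rw [fromCols_mulVec]
  ext i
  change ∑ k, A i k * x k = ∑ k : T, A i k * x k + ∑ k : Δ, A i k * x k
  rw [Finset.sum_coe_sort T fun k => A i k * x k, Finset.sum_coe_sort Δ fun k => A i k * x k,
    ← Finset.sum_union hdisj]
  exact (Finset.sum_subset (Finset.subset_univ _) fun k _ hk => by rw [hx k hk, mul_zero]).symm

lemma subv_transpose_mulVec_mulVec_lsqFull {S : Finset (Fin m)}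
    (hS : IsUnit ((cols A S)ᵀ * cols A S)) (y : Fin n → ℝ) :
    subv (Aᵀ *ᵥ (A *ᵥ lsqFull A S y)) S = subv (Aᵀ *ᵥ y) S := by
  have hsupp : suppOn (lsqFull A S y) S := fun j hj => dif_neg hj
  rw [← transpose_cols_mulVec, ← transpose_cols_mulVec, mulVec_eq_cols_mulVec_subv A hsupp]
  have hsubv : subv (lsqFull A S y) S = lsq A S y := funext fun j => dif_pos j.2
  rw [hsubv, lsq, mulVec_mulVec, mulVec_mulVec, mul_nonsing_inv _ ((isUnit_iff_isUnit_det _).1 hS),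
    one_mulVec]

lemma schur_eq (T Δ : Finset (Fin m)) :
    schur A T Δ = (cols A Δ)ᵀ * cols A Δ -
      (cols A Δ)ᵀ * cols A T * ((cols A T)ᵀ * cols A T)⁻¹ * ((cols A T)ᵀ * cols A Δ) := by
  simp only [schur, projM, Matrix.mul_sub, Matrix.sub_mul, Matrix.mul_one, Matrix.mul_assoc]

lemma linearIndependent_fromCols_cols {T Δ : Finset (Fin m)} (hdisj : Disjoint T Δ)
    (hrank : IsUnit ((cols A (T ∪ Δ))ᵀ * cols A (T ∪ Δ))) :
    LinearIndependent ℝ (fromCols (cols A T) (cols A Δ)).col := by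
  have hcol : (fromCols (cols A T) (cols A Δ)).col =
      (cols A (T ∪ Δ)).col ∘ Equiv.Finset.union T Δ hdisj := by
    ext (j | j) i <;> rfl
  rw [hcol, linearIndependent_equiv]
  exact (isUnit_transpose_mul_self_iff _).1 hrank

lemma subv_eq_of_subv_transpose_mulVec_mulVec_eq_zero {T Δ : Finset (Fin m)}
    (hdisj : Disjoint T Δ) (hrank : IsUnit ((cols A (T ∪ Δ))ᵀ * cols A (T ∪ Δ)))
    {x : Fin m → ℝ} (hx : suppOn x (T ∪ Δ)) (hT : subv (Aᵀ *ᵥ (A *ᵥ x)) T = 0) :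
    subv x T = -(crossMat A T Δ *ᵥ subv (Aᵀ *ᵥ (A *ᵥ x)) Δ) ∧
      subv x Δ = (schur A T Δ)⁻¹ *ᵥ subv (Aᵀ *ᵥ (A *ᵥ x)) Δ := by
  set F := fromCols (cols A T) (cols A Δ)
  have hLI := linearIndependent_fromCols_cols A hdisj hrank
  have hP : IsUnit ((cols A T)ᵀ * cols A T) :=
    (isUnit_transpose_mul_self_iff _).2 (hLI.comp Sum.inl Sum.inl_injective)
  have hG := (isUnit_transpose_mul_self_iff F).2 hLI
  rw [transpose_fromCols, fromRows_mul_fromCols] at hG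
  have hsys : (Fᵀ * F) *ᵥ Sum.elim (subv x T) (subv x Δ) =
      Sum.elim (0 : T → ℝ) (subv (Aᵀ *ᵥ (A *ᵥ x)) Δ) := by
    rw [← mulVec_mulVec, ← mulVec_eq_fromCols_mulVec A hdisj hx, transpose_fromCols,
      fromRows_mulVec, transpose_cols_mulVec, transpose_cols_mulVec, hT]
  rw [transpose_fromCols, fromRows_mul_fromCols] at hsys
  rw [crossMat, schur_eq]
  exact fromBlocks_mulVec_eq_sumElim_zero hP hG hsys

end Columns

/-- ℓ² bound on the error between the restricted minimizer and the
least-squares estimate. -/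
theorem stmt5 (n m : ℕ) (A : Matrix (Fin n) (Fin m) ℝ) (T Δ : Finset (Fin m))
    (hdisj : Disjoint T Δ)
    (hrank : IsUnit ((cols A (T ∪ Δ))ᵀ * cols A (T ∪ Δ)))
    (γ : ℝ) (hγ : 0 < γ) (y : Fin n → ℝ) (btil : Fin m → ℝ)
    (hmin : IsRestrMin A y γ T (T ∪ Δ) btil) :
    l2v (btil - lsqFull A (T ∪ Δ) y) ≤
      γ * Real.sqrt (Δ.card) *
        Real.sqrt (spec (crossMat A T Δ) ^ 2 + spec ((schur A T Δ)⁻¹) ^ 2) := by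
  set x := lsqFull A (T ∪ Δ) y - btil
  set z := Aᵀ *ᵥ (A *ᵥ x)
  have hx : suppOn x (T ∪ Δ) := fun j hj => by simp [x, lsqFull, hj, hmin.1 j hj]
  have hz : ∀ j ∈ T ∪ Δ, z j = (Aᵀ *ᵥ (y - A *ᵥ btil)) j := fun j hj => by
    have := congrFun (subv_transpose_mulVec_mulVec_lsqFull A hrank y) ⟨j, hj⟩
    simp only [subv] at this
    simp only [z, x, mulVec_sub, Pi.sub_apply, this]
  have hzT : subv z T = 0 := funext fun j =>
    (hz j (mem_union_left _ j.2)).trans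
      (hmin.residual_eq_zero hγ.le (mem_union_left _ j.2) j.2)
  have hzΔ : l2v (subv z Δ) ≤ √Δ.card * γ := by
    have := l2v_le_sqrt_card_mul hγ.le fun j : Δ => (hz j (mem_union_right _ j.2)) ▸
      hmin.abs_residual_le hγ.le (mem_union_right _ j.2) (disjoint_right.1 hdisj j.2)
    rwa [Fintype.card_coe] at this
  obtain ⟨hxT, hxΔ⟩ := subv_eq_of_subv_transpose_mulVec_mulVec_eq_zero A hdisj hrank hx hzT
  have hT : l2v (subv x T) ≤ spec (crossMat A T Δ) * (√Δ.card * γ) := by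
    rw [hxT, l2v_neg]
    exact (l2v_mulVec_le _ _).trans (by gcongr; exact spec_nonneg _)
  have hΔ : l2v (subv x Δ) ≤ spec (schur A T Δ)⁻¹ * (√Δ.card * γ) := by
    rw [hxΔ]
    exact (l2v_mulVec_le _ _).trans (by gcongr; exact spec_nonneg _)
  calc l2v (btil - lsqFull A (T ∪ Δ) y) = l2v x := by rw [← neg_sub, l2v_neg]
    _ ≤ _ := l2v_le_of_suppOn_union hdisj hx hT hΔ
    _ = _ := by
      rw [mul_pow (spec _), mul_pow (spec _), ← add_mul, Real.sqrt_mul' _ (sq_nonneg _),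
        Real.sqrt_sq (by positivity)]
      ring
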